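/- Function value convergence of v-iBPG: under the standing assumptions and the restricted relative smoothness exponent assumption, if k^{−γ}·Σ_{i=0}^{k-1} θ_i^{1−γ}·η_i·(‖z̃^{i+1}‖+1) → 0, k^{−γ}·Σ_{i=0}^{k-1} μ_i → 0 and k^{−γ}·Σ_{i=0}^{k-1} θ_i^{1−γ}·ν_i → 0, then F(x^k) → F* as k → ∞. -/

import Mathlib

open Filter Topology RealInnerProductSpace

/-- The Bregman distance associated with the kernel `φ` whose gradient map is `gφ`. -/
noncomputable def breg {E : Type*} [NormedAddCommGroup E] [InnerProductSpace ℝ E]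
    (φ : E → ℝ) (gφ : E → E) (x y : E) : ℝ :=
  φ x - φ y - ⟪gφ y, x - y⟫

/-- The ν-subdifferential of `P` (a proper function with effective domain `domP`) at `x`. -/
def nuSubdiff {E : Type*} [NormedAddCommGroup E] [InnerProductSpace ℝ E]
    (P : E → ℝ) (domP : Set E) (ν : ℝ) (x : E) : Set E :=
  {d : E | ∀ u ∈ domP, P x + ⟪d, u - x⟫ - ν ≤ P u}

open Classical in
/-- Extension of a real-valued function with effective domain `dom` to an `EReal`-valued
function taking the value `⊤` outside `dom`. -/
noncomputable def extFun {E : Type*} (g : E → ℝ) (dom : Set E) : E → EReal :=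
  fun x => if x ∈ dom then (g x : EReal) else ⊤

/-- `φ` (with effective domain `domφ` and gradient map `gφ`) is essentially smooth. -/
def EssentiallySmooth {E : Type*} [NormedAddCommGroup E] [InnerProductSpace ℝ E]
    [FiniteDimensional ℝ E] (φ : E → ℝ) (domφ : Set E) (gφ : E → E) : Prop :=
  (interior domφ).Nonempty ∧
  (∀ x ∈ interior domφ, HasGradientAt φ (gφ x) x) ∧
  ∀ (u : ℕ → E) (u₀ : E), (∀ n, u n ∈ interior domφ) →
    Tendsto u atTop (𝓝 u₀) → u₀ ∈ frontier (interior domφ) →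
    Tendsto (fun n => ‖gφ (u n)‖) atTop atTop

/-- The standing assumptions (Assumption A) for the problem `inf {P x + f x : x ∈ Q}`. -/
structure Standing {E : Type*} [NormedAddCommGroup E] [InnerProductSpace ℝ E]
    [FiniteDimensional ℝ E] (Q domφ domP domf X : Set E)
    (φ P f : E → ℝ) (gφ gf : E → E) (L : ℝ) : Prop where
  hQclosed : IsClosed Q
  hQconv : Convex ℝ Q
  hQint : (interior Q).Nonempty
  hφconv : ConvexOn ℝ domφ φ
  hφstrict : StrictConvexOn ℝ (interior domφ) φ
  hφsmooth : EssentiallySmooth φ domφ gφ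
  hφQ : closure domφ = Q
  hPne : domP.Nonempty
  hPconv : ConvexOn ℝ domP P
  hPclosed : LowerSemicontinuous (extFun P domP)
  hPQ : (domP ∩ interior Q).Nonempty
  hfconv : ConvexOn ℝ domf f
  hfclosed : LowerSemicontinuous (extFun f domf)
  hfdom : domφ ⊆ domf
  hfgrad : ∀ x ∈ interior domφ, HasGradientAt f (gf x) x
  hXclosed : IsClosed X
  hXconv : Convex ℝ X
  hXsup : domP ∩ domφ ⊆ X
  hLnn : 0 ≤ L
  hrel : ∀ u ∈ interior domφ ∩ X, ∀ v ∈ domφ ∩ X,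
    f v ≤ f u + ⟪gf u, v - u⟫ + L * breg φ gφ v u

/-- Conditions on the inertial parameter sequence `{θ_k}` (with `θ_{−1} = θ_0 = 1`; the
sequence is represented over `ℕ`, using truncated subtraction so that `θ (k-1)` at `k = 0`
stands for `θ_{−1} = 1`): `θ_k ∈ (0,1]`, `θ_k ≤ (α−1)/(k+α−1)` for all `k ≥ 1`, where
`α ≥ γ+1`, and `ϑ_k := θ_{k−1}^{−γ} − (1−θ_k)·θ_k^{−γ} ≥ 0` for all `k ≥ 1`. -/
def ThetaSeq (γ α : ℝ) (θ : ℕ → ℝ) : Prop :=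
  θ 0 = 1 ∧ (∀ k, θ k ∈ Set.Ioc (0:ℝ) 1) ∧ γ + 1 ≤ α ∧
  (∀ k : ℕ, 1 ≤ k → θ k ≤ (α - 1) / ((k : ℝ) + α - 1)) ∧
  (∀ k : ℕ, 1 ≤ k → 0 ≤ (θ (k-1)) ^ (-γ) - (1 - θ k) * (θ k) ^ (-γ))

/-- The restricted relative smoothness exponent assumption (Assumption C): there are `τ > 0`
and `γ ≥ 1` such that
`D_f((1−θ)x + θz̃, (1−θ)x + θz) ≤ τ L θ^γ D_φ(z̃, z)` for all `x, z̃ ∈ dom P ∩ dom φ`,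
`z ∈ int dom φ ∩ X` and `θ ∈ (0,1]`. -/
def RestrictedRelSmoothExponent {E : Type*} [NormedAddCommGroup E] [InnerProductSpace ℝ E]
    (domφ domP X : Set E) (φ f : E → ℝ) (gφ gf : E → E) (L τ γ : ℝ) : Prop :=
  0 < τ ∧ 1 ≤ γ ∧
  ∀ xx ∈ domP ∩ domφ, ∀ zt ∈ domP ∩ domφ, ∀ z ∈ interior domφ ∩ X, ∀ θ : ℝ,
    θ ∈ Set.Ioc (0:ℝ) 1 →
    breg f gf ((1 - θ) • xx + θ • zt) ((1 - θ) • xx + θ • z) ≤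
      τ * L * θ ^ γ * breg φ gφ zt z

/-- The v-iBPG iterates with parameter sequence `θ` and inexactness tolerance sequences
`η`, `μ`, `ν`. -/
structure VIBPGIter {E : Type*} [NormedAddCommGroup E] [InnerProductSpace ℝ E]
    [FiniteDimensional ℝ E] (domφ domP X : Set E) (φ P : E → ℝ) (gφ gf : E → E)
    (L τ γ : ℝ) (θ η μ ν : ℕ → ℝ) (x y z zt : ℕ → E) : Prop where
  hη : ∀ k, 0 ≤ η k
  hμ : ∀ k, 0 ≤ μ k
  hν : ∀ k, 0 ≤ ν k
  hx0 : x 0 ∈ domP ∩ domφ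
  hy : ∀ k, y k = (1 - θ k) • x k + θ k • z k
  hz : ∀ k, z k ∈ X ∩ interior domφ
  hzt : ∀ k, zt (k+1) ∈ domP ∩ domφ
  hinex : ∀ k, ∃ d ∈ nuSubdiff P domP (ν k) (zt (k+1)),
    ‖d + gf (y k) + (τ * L * θ k ^ (γ - 1)) • (gφ (z (k+1)) - gφ (z k))‖ ≤ η k
  hdist : ∀ k, breg φ gφ (zt (k+1)) (z (k+1)) ≤ μ k
  hxrec : ∀ k, x (k+1) = (1 - θ k) • x k + θ k • zt (k+1)

/-!
Fix a comparison point `u ∈ dom P ∩ dom φ`. Convexity of `P` and `f`, the inexact optimality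
condition and the three-point identity for Bregman distances give the one-step estimate
`F(x^{k+1}) - F(u) ≤ (1-θ_k)(F(x^k) - F(u)) + τLθ_k^γ (D_φ(u,z^k) - D_φ(u,z^{k+1})) + errors`.
Multiplying by `θ_k^{-γ}` and using `ϑ_k ≥ 0` and `F(x^k) ≥ F*`, the quantity
`θ_{k-1}^{-γ}(F(x^k) - F(u)) + τL D_φ(u,z^k)` grows per step by at most `ϑ_k (F(u) - F*)` plus
errors. Telescoping, with `θ_{K-1} ≤ (α-1)/K` and `θ_j ≥ θ_1/(j+1)`, gives
`F(x^K) - F(u) ≤ B (F(u) - F*) + O(K^{-γ} (1 + error sums))` with `B` independent of `K` and `u`.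
Finally `F(u)` can be taken arbitrarily close to `F*`, by pushing a near-minimizer in
`dom P ∩ dom f ∩ Q` slightly towards a point of `dom P ∩ int dom φ`.
-/

section Bregman

variable {E : Type*} [NormedAddCommGroup E] [InnerProductSpace ℝ E]

theorem ConvexOn.add_inner_sub_le_of_hasGradientAt [CompleteSpace E] {S : Set E} {g : E → ℝ}
    (hg : ConvexOn ℝ S g) {a b G : E} (ha : a ∈ S) (hb : b ∈ S) (hG : HasGradientAt g G b) :
    g b + ⟪G, a - b⟫ ≤ g a := by
  have hline : HasDerivAt (g ∘ AffineMap.lineMap (k := ℝ) b a) ⟪G, a - b⟫ 0 := by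
    have hG' : HasFDerivAt g (InnerProductSpace.toDual ℝ E G) (AffineMap.lineMap b a (0:ℝ)) := by
      simpa using hG.hasFDerivAt
    simpa using hG'.comp_hasDerivAt (0:ℝ) AffineMap.hasDerivAt_lineMap
  have hslope := (hg.comp_affineMap (AffineMap.lineMap (k := ℝ) b a)).le_slope_of_hasDerivAt
    (x := 0) (y := 1) (by simpa) (by simpa) zero_lt_one hline
  simp only [slope_def_field, Function.comp_apply, AffineMap.lineMap_apply_zero,
    AffineMap.lineMap_apply_one, sub_zero, div_one] at hslope
  linarith

theorem breg_nonneg [CompleteSpace E] {S : Set E} {φ : E → ℝ} {gφ : E → E}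
    (hφ : ConvexOn ℝ S φ) {a b : E} (ha : a ∈ S) (hb : b ∈ S) (hG : HasGradientAt φ (gφ b) b) :
    0 ≤ breg φ gφ a b := by
  have := hφ.add_inner_sub_le_of_hasGradientAt ha hb hG
  rw [breg]
  linarith

theorem breg_sub_inner_eq (φ : E → ℝ) (gφ : E → E) (u z z' w : E) :
    breg φ gφ w z - ⟪gφ z' - gφ z, w - u⟫ = breg φ gφ u z - breg φ gφ u z' + breg φ gφ w z' := by
  simp only [breg, inner_sub_left, inner_sub_right]
  ring

end Bregman

section Step

variable {E : Type*} [NormedAddCommGroup E] [InnerProductSpace ℝ E]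

theorem ConvexOn.le_of_mem_nuSubdiff {S : Set E} {P : E → ℝ} (hP : ConvexOn ℝ S P)
    {θ ν : ℝ} (hθ : θ ∈ Set.Icc (0:ℝ) 1) {x w u d : E} (hx : x ∈ S) (hw : w ∈ S) (hu : u ∈ S)
    (hd : d ∈ nuSubdiff P S ν w) :
    P ((1 - θ) • x + θ • w) ≤ (1 - θ) * P x + θ * P u + θ * (⟪d, w - u⟫ + ν) := by
  have hconv : P ((1 - θ) • x + θ • w) ≤ (1 - θ) * P x + θ * P w :=
    hP.2 hx hw (sub_nonneg.2 hθ.2) hθ.1 (by ring)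
  have hsub : P w - ⟪d, w - u⟫ - ν ≤ P u := by
    simpa only [← neg_sub w u, inner_neg_right, ← sub_eq_add_neg] using hd u hu
  linarith [mul_le_mul_of_nonneg_left hsub hθ.1]

variable [CompleteSpace E] {domφ domP domf X : Set E} {φ f : E → ℝ} {gφ gf : E → E} {L τ γ : ℝ}

theorem RestrictedRelSmoothExponent.le_of_hasGradientAt
    (hrrse : RestrictedRelSmoothExponent domφ domP X φ f gφ gf L τ γ)
    (hf : ConvexOn ℝ domf f) (hφf : domφ ⊆ domf) {θ : ℝ} (hθ : θ ∈ Set.Ioc (0:ℝ) 1)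
    {x w u z : E} (hx : x ∈ domP ∩ domφ) (hw : w ∈ domP ∩ domφ) (hu : u ∈ domφ)
    (hz : z ∈ interior domφ ∩ X)
    (hgrad : HasGradientAt f (gf ((1 - θ) • x + θ • z)) ((1 - θ) • x + θ • z)) :
    f ((1 - θ) • x + θ • w) ≤ (1 - θ) * f x + θ * f u
      + θ * ⟪gf ((1 - θ) • x + θ • z), w - u⟫ + τ * L * θ ^ γ * breg φ gφ w z := by
  have h1θ : 0 ≤ 1 - θ := sub_nonneg.2 hθ.2
  have hxf := hφf hx.2
  have huf := hφf hu
  have hyf : (1 - θ) • x + θ • z ∈ domf :=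
    hf.1 hxf (hφf (interior_subset hz.1)) h1θ hθ.1.le (by ring)
  have hvf : (1 - θ) • x + θ • u ∈ domf := hf.1 hxf huf h1θ hθ.1.le (by ring)
  have hsmooth := hrrse.2.2 x hx w hw z hz θ hθ
  have hgrad_ineq := hf.add_inner_sub_le_of_hasGradientAt hvf hyf hgrad
  have hconv : f ((1 - θ) • x + θ • u) ≤ (1 - θ) * f x + θ * f u :=
    hf.2 hxf huf h1θ hθ.1.le (by ring)
  have e1 : (1 - θ) • x + θ • w - ((1 - θ) • x + θ • z) = θ • (w - z) := by module
  have e2 : (1 - θ) • x + θ • u - ((1 - θ) • x + θ • z) = θ • (u - z) := by module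
  have e3 : ⟪gf ((1 - θ) • x + θ • z), w - z⟫ =
      ⟪gf ((1 - θ) • x + θ • z), w - u⟫ + ⟪gf ((1 - θ) • x + θ • z), u - z⟫ := by
    rw [← inner_add_right, sub_add_sub_cancel]
  rw [breg, e1, real_inner_smul_right] at hsmooth
  rw [e2, real_inner_smul_right] at hgrad_ineq
  linarith [congrArg (θ * ·) e3]

theorem vIBPG_step_le {P : E → ℝ} (hP : ConvexOn ℝ domP P)
    (hrrse : RestrictedRelSmoothExponent domφ domP X φ f gφ gf L τ γ)
    (hf : ConvexOn ℝ domf f) (hφf : domφ ⊆ domf) (hτL : 0 ≤ τ * L)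
    {θ ν η μ : ℝ} (hθ : θ ∈ Set.Ioc (0:ℝ) 1) {x w u z z' d : E}
    (hx : x ∈ domP ∩ domφ) (hw : w ∈ domP ∩ domφ) (hu : u ∈ domP ∩ domφ)
    (hz : z ∈ interior domφ ∩ X)
    (hgrad : HasGradientAt f (gf ((1 - θ) • x + θ • z)) ((1 - θ) • x + θ • z))
    (hd : d ∈ nuSubdiff P domP ν w)
    (hΔ : ‖d + gf ((1 - θ) • x + θ • z) + (τ * L * θ ^ (γ - 1)) • (gφ z' - gφ z)‖ ≤ η)
    (hμ : breg φ gφ w z' ≤ μ) :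
    P ((1 - θ) • x + θ • w) + f ((1 - θ) • x + θ • w) ≤ (1 - θ) * (P x + f x)
      + θ * (P u + f u) + τ * L * θ ^ γ * (breg φ gφ u z - breg φ gφ u z')
      + (θ * (ν + η * (‖u‖ + ‖w‖)) + τ * L * θ ^ γ * μ) := by
  set Δ := d + gf ((1 - θ) • x + θ • z) + (τ * L * θ ^ (γ - 1)) • (gφ z' - gφ z)
  have hPstep := hP.le_of_mem_nuSubdiff (Set.Ioc_subset_Icc_self hθ) hx.1 hw.1 hu.1 hd
  have hfstep := hrrse.le_of_hasGradientAt hf hφf hθ hx hw hu.2 hz hgrad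
  have hθγ : θ * (τ * L * θ ^ (γ - 1)) = τ * L * θ ^ γ := by
    rw [Real.rpow_sub hθ.1, Real.rpow_one]
    field_simp [hθ.1.ne']
  have hsplit : θ * (⟪d, w - u⟫ + ⟪gf ((1 - θ) • x + θ • z), w - u⟫) =
      θ * ⟪Δ, w - u⟫ - τ * L * θ ^ γ * ⟪gφ z' - gφ z, w - u⟫ := by
    simp only [Δ, inner_add_left, real_inner_smul_left, ← hθγ]
    ring
  have hΔbound : ⟪Δ, w - u⟫ ≤ η * (‖u‖ + ‖w‖) :=
    calc ⟪Δ, w - u⟫ ≤ ‖Δ‖ * ‖w - u‖ := real_inner_le_norm _ _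
      _ ≤ η * (‖u‖ + ‖w‖) := by
        rw [add_comm ‖u‖]
        exact mul_le_mul hΔ (norm_sub_le w u) (norm_nonneg _) ((norm_nonneg _).trans hΔ)
  have hthree := breg_sub_inner_eq φ gφ u z z' w
  have hs : 0 ≤ τ * L * θ ^ γ := mul_nonneg hτL (Real.rpow_nonneg hθ.1.le γ)
  linarith [mul_le_mul_of_nonneg_left hΔbound hθ.1.le, mul_le_mul_of_nonneg_left hμ hs,
    congrArg (τ * L * θ ^ γ * ·) hthree]

end Step

/-- The paper's `ϑ_k`. -/
noncomputable def thetaGap (γ : ℝ) (θ : ℕ → ℝ) (k : ℕ) : ℝ :=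
  θ (k - 1) ^ (-γ) - (1 - θ k) * θ k ^ (-γ)

theorem sum_range_thetaGap {γ : ℝ} {θ : ℕ → ℝ} (hθ0 : θ 0 = 1) (hθ : ∀ k, 0 < θ k) (K : ℕ) :
    ∑ j ∈ Finset.range K, thetaGap γ θ j =
      1 - θ (K - 1) ^ (-γ) + ∑ j ∈ Finset.range K, θ j ^ (1 - γ) := by
  have hterm : ∀ j, thetaGap γ θ j = (θ (j - 1) ^ (-γ) - θ (j + 1 - 1) ^ (-γ)) + θ j ^ (1 - γ) := by
    intro j
    rw [thetaGap, Nat.add_sub_cancel, sub_eq_add_neg (1 : ℝ) γ, Real.rpow_add (hθ j),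
      Real.rpow_one]
    ring
  simp only [hterm, Finset.sum_add_distrib, Finset.sum_range_sub' (fun j => θ (j - 1) ^ (-γ)),
    Nat.zero_sub, hθ0, Real.one_rpow]

theorem lyapunov_succ_le {θ a D : ℕ → ℝ} {γ c δ e : ℝ} {k : ℕ} (hθ : 0 < θ k)
    (hgap : 0 ≤ thetaGap γ θ k) (ha : -δ ≤ a k)
    (hstep : a (k + 1) ≤ (1 - θ k) * a k + c * θ k ^ γ * (D k - D (k + 1)) + θ k ^ γ * e) :
    θ k ^ (-γ) * a (k + 1) + c * D (k + 1) ≤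
      θ (k - 1) ^ (-γ) * a k + c * D k + (thetaGap γ θ k * δ + e) := by
  have hinv : θ k ^ (-γ) * θ k ^ γ = 1 := by
    rw [← Real.rpow_add hθ, neg_add_cancel, Real.rpow_zero]
  have hscaled := mul_le_mul_of_nonneg_left hstep (Real.rpow_nonneg hθ.le (-γ))
  have hδ := mul_le_mul_of_nonneg_left (neg_le_iff_add_nonneg.1 ha) hgap
  unfold thetaGap at hδ ⊢
  linear_combination hscaled + hδ + (c * (D k - D (k + 1)) + e) * hinv

theorem rpow_neg_mul_le_sum_of_step {θ a D e : ℕ → ℝ} {γ c δ : ℝ} (hθ0 : θ 0 = 1)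
    (hθ : ∀ k, 0 < θ k) (hc : 0 ≤ c) (hD : ∀ k, 0 ≤ D k) (hgap : ∀ k, 0 ≤ thetaGap γ θ k)
    (ha : ∀ k, -δ ≤ a k)
    (hstep : ∀ k,
      a (k + 1) ≤ (1 - θ k) * a k + c * θ k ^ γ * (D k - D (k + 1)) + θ k ^ γ * e k)
    (K : ℕ) :
    θ (K - 1) ^ (-γ) * a K ≤ a 0 + c * D 0 + ∑ j ∈ Finset.range K, (thetaGap γ θ j * δ + e j) := by
  suffices h : θ (K - 1) ^ (-γ) * a K + c * D K ≤
      a 0 + c * D 0 + ∑ j ∈ Finset.range K, (thetaGap γ θ j * δ + e j) by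
    linarith [mul_nonneg hc (hD K)]
  induction K with
  | zero => simp [hθ0]
  | succ K ih =>
    rw [Finset.sum_range_succ, Nat.add_sub_cancel]
    linarith [lyapunov_succ_le (hθ K) (hgap K) (ha K) (hstep K)]

theorem div_add_one_le_of_thetaGap {γ p q c n : ℝ} (hγ : 1 ≤ γ) (hp : 0 < p)
    (hq : q ∈ Set.Ioc (0:ℝ) 1) (hc : c ∈ Set.Ioc (0:ℝ) 1) (hn : 0 < n) (hcp : c / n ≤ p)
    (hgap : (1 - q) * q ^ (-γ) ≤ p ^ (-γ)) :
    c / (n + 1) ≤ q := by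
  by_contra! hlt
  have hpq : (1 - q) * p ^ γ ≤ q ^ γ := by
    rw [Real.rpow_neg hq.1.le, Real.rpow_neg hp.le, ← div_eq_mul_inv,
      div_le_iff₀ (Real.rpow_pos_of_pos hq.1 γ)] at hgap
    rwa [inv_mul_eq_div, le_div_iff₀ (Real.rpow_pos_of_pos hp γ)] at hgap
  have hratio : n / (n + 1) ≤ 1 - q := by
    have : q < 1 / (n + 1) := hlt.trans_le (div_le_div_of_nonneg_right hc.2 (by positivity))
    rw [lt_div_iff₀ (by positivity)] at this
    rw [div_le_iff₀ (by positivity)]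
    nlinarith
  have hratio_pow : (n / (n + 1)) ^ γ ≤ n / (n + 1) := by
    simpa using Real.rpow_le_rpow_of_exponent_ge (by positivity)
      ((div_le_one (by positivity)).2 (by linarith)) hγ
  have hcn : 0 ≤ c / n := div_nonneg hc.1.le hn.le
  have hsplit : c / (n + 1) = n / (n + 1) * (c / n) := by field_simp
  have hchain : (c / (n + 1)) ^ γ ≤ q ^ γ :=
    calc (c / (n + 1)) ^ γ = (n / (n + 1)) ^ γ * (c / n) ^ γ := by
          rw [hsplit, Real.mul_rpow (by positivity) hcn]
      _ ≤ (1 - q) * p ^ γ := by gcongr <;> linarith [hq.2]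
      _ ≤ q ^ γ := hpq
  linarith [Real.rpow_lt_rpow hq.1.le hlt (by linarith : 0 < γ)]

namespace ThetaSeq

variable {γ α : ℝ} {θ : ℕ → ℝ}

theorem pos (hθ : ThetaSeq γ α θ) (k : ℕ) : 0 < θ k := (hθ.2.1 k).1

theorem thetaGap_nonneg (hθ : ThetaSeq γ α θ) (k : ℕ) : 0 ≤ thetaGap γ θ k := by
  rcases Nat.eq_zero_or_pos k with rfl | hk
  · simp [thetaGap, hθ.1]
  · exact hθ.2.2.2.2 k hk

theorem div_add_one_le (hθ : ThetaSeq γ α θ) (hγ : 1 ≤ γ) (j : ℕ) : θ 1 / (j + 1) ≤ θ j := by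
  induction j with
  | zero => simpa [hθ.1] using (hθ.2.1 1).2
  | succ j ih =>
    have hgap := hθ.thetaGap_nonneg (j + 1)
    rw [thetaGap, Nat.add_sub_cancel, sub_nonneg] at hgap
    push_cast
    exact div_add_one_le_of_thetaGap hγ (hθ.pos j) (hθ.2.1 (j + 1)) (hθ.2.1 1)
      (by positivity) ih hgap

theorem rpow_pred_le (hθ : ThetaSeq γ α θ) (hγ : 1 ≤ γ) {K : ℕ} (hK : 1 ≤ K) :
    θ (K - 1) ^ γ ≤ (α - 1) ^ γ * (K : ℝ) ^ (-γ) := by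
  have hα : 1 ≤ α - 1 := by linarith [hθ.2.2.1]
  have hKpos : (0 : ℝ) < K := by exact_mod_cast hK
  have hpred : θ (K - 1) ≤ (α - 1) / K := by
    rcases Nat.lt_or_ge K 2 with hK2 | hK2
    · obtain rfl : K = 1 := by omega
      simpa [hθ.1] using hα
    · have h := hθ.2.2.2.1 (K - 1) (by omega)
      rw [Nat.cast_sub (by omega), Nat.cast_one] at h
      exact h.trans (div_le_div_of_nonneg_left (by linarith) hKpos (by linarith))
  calc θ (K - 1) ^ γ ≤ ((α - 1) / K) ^ γ :=
        Real.rpow_le_rpow (hθ.pos _).le hpred (by linarith)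
    _ = (α - 1) ^ γ * (K : ℝ) ^ (-γ) := by
        rw [Real.div_rpow (by linarith) hKpos.le, Real.rpow_neg hKpos.le, div_eq_mul_inv]

theorem sum_range_rpow_one_sub_le (hθ : ThetaSeq γ α θ) (hγ : 1 ≤ γ) (K : ℕ) :
    ∑ j ∈ Finset.range K, θ j ^ (1 - γ) ≤ (K : ℝ) ^ γ * θ 1 ^ (1 - γ) := by
  rcases Nat.eq_zero_or_pos K with rfl | hK
  · simpa using mul_nonneg (Real.rpow_nonneg le_rfl γ) (Real.rpow_nonneg (hθ.pos 1).le (1 - γ))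
  have hKpos : (0 : ℝ) < K := by exact_mod_cast hK
  have hterm : ∀ j ∈ Finset.range K, θ j ^ (1 - γ) ≤ (θ 1 / K) ^ (1 - γ) := by
    intro j hj
    have hjK : (j : ℝ) + 1 ≤ K := by exact_mod_cast Finset.mem_range.1 hj
    have hlow : θ 1 / K ≤ θ j :=
      (div_le_div_of_nonneg_left (hθ.pos 1).le (by positivity) hjK).trans
        (hθ.div_add_one_le hγ j)
    exact Real.rpow_le_rpow_of_nonpos (div_pos (hθ.pos 1) hKpos) hlow (by linarith)
  calc ∑ j ∈ Finset.range K, θ j ^ (1 - γ) ≤ K * (θ 1 / K) ^ (1 - γ) := by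
        simpa using Finset.sum_le_card_nsmul _ _ _ hterm
    _ = (K : ℝ) ^ γ * θ 1 ^ (1 - γ) := by
        rw [Real.div_rpow (hθ.pos 1).le hKpos.le, Real.rpow_sub hKpos, Real.rpow_one]
        field_simp

theorem rpow_pred_mul_sum_thetaGap_le (hθ : ThetaSeq γ α θ) (hγ : 1 ≤ γ) {K : ℕ}
    (hK : 1 ≤ K) :
    θ (K - 1) ^ γ * ∑ j ∈ Finset.range K, thetaGap γ θ j ≤ (α - 1) ^ γ * (1 + θ 1 ^ (1 - γ)) := by
  have hKpos : (0 : ℝ) < K := by exact_mod_cast hK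
  have hsum : ∑ j ∈ Finset.range K, thetaGap γ θ j ≤ 1 + (K : ℝ) ^ γ * θ 1 ^ (1 - γ) := by
    rw [sum_range_thetaGap hθ.1 hθ.pos]
    linarith [Real.rpow_nonneg (hθ.pos (K - 1)).le (-γ), hθ.sum_range_rpow_one_sub_le hγ K]
  have hKγ : (K : ℝ) ^ (-γ) * (K : ℝ) ^ γ = 1 := by
    rw [← Real.rpow_add hKpos, neg_add_cancel, Real.rpow_zero]
  have hKγ_le : (K : ℝ) ^ (-γ) ≤ 1 :=
    Real.rpow_le_one_of_one_le_of_nonpos (by exact_mod_cast hK) (by linarith)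
  have hα : 0 ≤ (α - 1) ^ γ := Real.rpow_nonneg (by linarith [hθ.2.2.1]) γ
  calc θ (K - 1) ^ γ * ∑ j ∈ Finset.range K, thetaGap γ θ j
      ≤ (α - 1) ^ γ * (K : ℝ) ^ (-γ) * (1 + (K : ℝ) ^ γ * θ 1 ^ (1 - γ)) :=
        mul_le_mul (hθ.rpow_pred_le hγ hK) hsum
          (Finset.sum_nonneg fun j _ => hθ.thetaGap_nonneg j) (by positivity)
    _ = (α - 1) ^ γ * ((K : ℝ) ^ (-γ) + θ 1 ^ (1 - γ)) := by
        linear_combination (α - 1) ^ γ * θ 1 ^ (1 - γ) * hKγ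
    _ ≤ (α - 1) ^ γ * (1 + θ 1 ^ (1 - γ)) := by gcongr

end ThetaSeq

theorem ConvexOn.exists_mem_interior_lt {E : Type*} [NormedAddCommGroup E] [NormedSpace ℝ E]
    {s t : Set E} {F : E → ℝ} (hF : ConvexOn ℝ s F) (ht : Convex ℝ t) {x₀ v : E}
    (hx₀ : x₀ ∈ s ∩ interior t) (hv : v ∈ s ∩ closure t) {c : ℝ} (hc : F v < c) :
    ∃ u ∈ s ∩ interior t, F u < c := by
  have hlim : Tendsto (fun r : ℝ => r * F x₀ + (1 - r) * F v) (𝓝[>] 0) (𝓝 (F v)) := by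
    have : Continuous (fun r : ℝ => r * F x₀ + (1 - r) * F v) := by fun_prop
    simpa using this.continuousWithinAt.tendsto (x := 0) (s := Set.Ioi 0)
  have hIoo : ∀ᶠ r in 𝓝[>] (0:ℝ), r ∈ Set.Ioo 0 1 := Ioo_mem_nhdsGT zero_lt_one
  obtain ⟨r, hrc, hr0, hr1⟩ := ((hlim.eventually (gt_mem_nhds hc)).and hIoo).exists
  have hr1' : 0 ≤ 1 - r := by linarith
  refine ⟨r • x₀ + (1 - r) • v, ⟨hF.1 hx₀.1 hv.1 hr0.le hr1' (by ring),
    ht.combo_interior_closure_mem_interior hx₀.2 hv.2 hr0 hr1' (by ring)⟩, ?_⟩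
  calc F (r • x₀ + (1 - r) • v) ≤ r * F x₀ + (1 - r) * F v :=
        hF.2 hx₀.1 hv.1 hr0.le hr1' (by ring)
    _ < c := hrc

theorem Standing.isGLB_image_inter {E : Type*} [NormedAddCommGroup E] [InnerProductSpace ℝ E]
    [FiniteDimensional ℝ E] {Q domφ domP domf X : Set E} {φ P f : E → ℝ} {gφ gf : E → E} {L : ℝ}
    (hstand : Standing Q domφ domP domf X φ P f gφ gf L) {Fstar : ℝ}
    (hFstar : IsGLB ((fun u => P u + f u) '' (domP ∩ domf ∩ Q)) Fstar) :
    IsGLB ((fun u => P u + f u) '' (domP ∩ domφ)) Fstar := by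
  have hφQ : domφ ⊆ Q := hstand.hφQ ▸ subset_closure
  have hsub : domP ∩ domφ ⊆ domP ∩ domf ∩ Q := fun v hv => ⟨⟨hv.1, hstand.hfdom hv.2⟩, hφQ hv.2⟩
  refine ⟨lowerBounds_mono_set (Set.image_mono hsub) hFstar.1,
    fun c hc => le_of_forall_gt fun c' hc' => ?_⟩
  obtain ⟨_, ⟨v, hv, rfl⟩, -, hvc⟩ := hFstar.exists_between hc'
  obtain ⟨x₀, hx₀P, hx₀Q⟩ := hstand.hPQ
  rw [← hstand.hφQ, hstand.hφconv.1.interior_closure_eq_interior_of_nonempty_interior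
    hstand.hφsmooth.1] at hx₀Q
  have hF : ConvexOn ℝ (domP ∩ domf) (fun u => P u + f u) :=
    (hstand.hPconv.subset Set.inter_subset_left (hstand.hPconv.1.inter hstand.hfconv.1)).add
      (hstand.hfconv.subset Set.inter_subset_right (hstand.hPconv.1.inter hstand.hfconv.1))
  obtain ⟨u, hu, hFu⟩ := hF.exists_mem_interior_lt hstand.hφconv.1
    ⟨⟨hx₀P, hstand.hfdom (interior_subset hx₀Q)⟩, hx₀Q⟩
    ⟨hv.1, by rw [hstand.hφQ]; exact hv.2⟩ hvc
  exact (hc ⟨u, ⟨hu.1.1, interior_subset hu.2⟩, rfl⟩).trans_lt hFu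

theorem tendsto_rpow_neg_mul_error_sum {E : Type*} [NormedAddCommGroup E] {γ a c C : ℝ}
    {θ η μ ν : ℕ → ℝ} {w : ℕ → E} (hγ : 0 < γ) (hθ : ∀ k, 0 < θ k) (hη : ∀ k, 0 ≤ η k)
    (hμ : ∀ k, 0 ≤ μ k) (hν : ∀ k, 0 ≤ ν k) (ha : 0 ≤ a) (hc : 0 ≤ c)
    (h1 : Tendsto (fun k : ℕ =>
      (k : ℝ) ^ (-γ) * ∑ i ∈ Finset.range k, θ i ^ (1 - γ) * η i * (‖w i‖ + 1)) atTop (𝓝 0))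
    (h2 : Tendsto (fun k : ℕ => (k : ℝ) ^ (-γ) * ∑ i ∈ Finset.range k, μ i) atTop (𝓝 0))
    (h3 : Tendsto (fun k : ℕ =>
      (k : ℝ) ^ (-γ) * ∑ i ∈ Finset.range k, θ i ^ (1 - γ) * ν i) atTop (𝓝 0)) :
    Tendsto (fun k : ℕ => (k : ℝ) ^ (-γ) * (C + ∑ i ∈ Finset.range k,
      (θ i ^ (1 - γ) * (ν i + η i * (a + ‖w i‖)) + c * μ i))) atTop (𝓝 0) := by
  have hpow : Tendsto (fun k : ℕ => (k : ℝ) ^ (-γ)) atTop (𝓝 0) :=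
    (tendsto_rpow_neg_atTop hγ).comp tendsto_natCast_atTop_atTop
  have hterm : ∀ i, θ i ^ (1 - γ) * (ν i + η i * (a + ‖w i‖)) + c * μ i ≤
      θ i ^ (1 - γ) * ν i + (a + 1) * (θ i ^ (1 - γ) * η i * (‖w i‖ + 1)) + c * μ i := by
    intro i
    have hθη : 0 ≤ θ i ^ (1 - γ) * η i := mul_nonneg (Real.rpow_nonneg (hθ i).le _) (hη i)
    nlinarith [mul_nonneg hθη (mul_nonneg ha (norm_nonneg (w i)))]
  have hsum : Tendsto (fun k : ℕ => (k : ℝ) ^ (-γ) * ∑ i ∈ Finset.range k,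
      (θ i ^ (1 - γ) * (ν i + η i * (a + ‖w i‖)) + c * μ i)) atTop (𝓝 0) := by
    refine tendsto_of_tendsto_of_tendsto_of_le_of_le tendsto_const_nhds
      (by simpa using (h3.add (h1.const_mul (a + 1))).add (h2.const_mul c))
      (fun k => mul_nonneg (Real.rpow_nonneg k.cast_nonneg _) (Finset.sum_nonneg fun i _ => ?_))
      (fun k => ?_)
    · exact add_nonneg (mul_nonneg (Real.rpow_nonneg (hθ i).le _)
        (add_nonneg (hν i) (mul_nonneg (hη i) (by positivity)))) (mul_nonneg hc (hμ i))
    · have := mul_le_mul_of_nonneg_left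
        (Finset.sum_le_sum (s := Finset.range k) fun i _ => hterm i)
        (Real.rpow_nonneg k.cast_nonneg (-γ))
      simp only [Finset.sum_add_distrib, ← Finset.mul_sum] at this ⊢
      linarith
  simpa [mul_add] using (hpow.mul_const C).add hsum

namespace VIBPGIter

variable {E : Type*} [NormedAddCommGroup E] [InnerProductSpace ℝ E] [FiniteDimensional ℝ E]
  {Q domφ domP domf X : Set E} {φ P f : E → ℝ} {gφ gf : E → E} {L τ γ α : ℝ}
  {θ η μ ν : ℕ → ℝ} {x y z zt : ℕ → E}

theorem mem_dom (hiter : VIBPGIter domφ domP X φ P gφ gf L τ γ θ η μ ν x y z zt)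
    (hdom : Convex ℝ (domP ∩ domφ)) (hθ : ∀ k, θ k ∈ Set.Icc (0:ℝ) 1) (k : ℕ) :
    x k ∈ domP ∩ domφ := by
  induction k with
  | zero => exact hiter.hx0
  | succ k ih =>
    rw [hiter.hxrec k]
    exact hdom ih (hiter.hzt k) (sub_nonneg.2 (hθ k).2) (hθ k).1 (by ring)

theorem y_mem_interior (hiter : VIBPGIter domφ domP X φ P gφ gf L τ γ θ η μ ν x y z zt)
    (hφ : Convex ℝ domφ) {k : ℕ} (hθ : θ k ∈ Set.Ioc (0:ℝ) 1) (hx : x k ∈ domφ) :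
    y k ∈ interior domφ := by
  rw [hiter.hy k]
  exact hφ.combo_closure_interior_mem_interior (subset_closure hx) (hiter.hz k).2
    (sub_nonneg.2 hθ.2) hθ.1 (by ring)

theorem value_sub_le_succ (hstand : Standing Q domφ domP domf X φ P f gφ gf L)
    (hrrse : RestrictedRelSmoothExponent domφ domP X φ f gφ gf L τ γ) (hθ : ThetaSeq γ α θ)
    (hiter : VIBPGIter domφ domP X φ P gφ gf L τ γ θ η μ ν x y z zt)
    {u : E} (hu : u ∈ domP ∩ domφ) (k : ℕ) :
    P (x (k + 1)) + f (x (k + 1)) - (P u + f u) ≤ (1 - θ k) * (P (x k) + f (x k) - (P u + f u))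
      + τ * L * θ k ^ γ * (breg φ gφ u (z k) - breg φ gφ u (z (k + 1)))
      + θ k ^ γ * (θ k ^ (1 - γ) * (ν k + η k * (‖u‖ + ‖zt (k + 1)‖)) + τ * L * μ k) := by
  have hθk := hθ.2.1 k
  have hx := hiter.mem_dom (hstand.hPconv.1.inter hstand.hφconv.1)
    (fun k => Set.Ioc_subset_Icc_self (hθ.2.1 k))
  have hgrad := hstand.hfgrad _ (hiter.y_mem_interior hstand.hφconv.1 hθk (hx k).2)
  obtain ⟨d, hd, hΔ⟩ := hiter.hinex k
  rw [hiter.hy k] at hgrad hΔ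
  have hstep := vIBPG_step_le hstand.hPconv hrrse hstand.hfconv hstand.hfdom
    (mul_nonneg hrrse.1.le hstand.hLnn) hθk (hx k) (hiter.hzt k) hu
    ⟨(hiter.hz k).2, (hiter.hz k).1⟩ hgrad hd hΔ (hiter.hdist k)
  have hθγ : θ k ^ γ * θ k ^ (1 - γ) = θ k := by
    rw [← Real.rpow_add hθk.1, add_sub_cancel, Real.rpow_one]
  rw [← hiter.hxrec k] at hstep
  linear_combination hstep - (ν k + η k * (‖u‖ + ‖zt (k + 1)‖)) * hθγ

theorem value_sub_le (hstand : Standing Q domφ domP domf X φ P f gφ gf L)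
    (hrrse : RestrictedRelSmoothExponent domφ domP X φ f gφ gf L τ γ) (hθ : ThetaSeq γ α θ)
    (hiter : VIBPGIter domφ domP X φ P gφ gf L τ γ θ η μ ν x y z zt)
    {Fstar : ℝ} (hlb : ∀ v ∈ domP ∩ domφ, Fstar ≤ P v + f v)
    {u : E} (hu : u ∈ domP ∩ domφ) {K : ℕ} (hK : 1 ≤ K) :
    P (x K) + f (x K) - (P u + f u) ≤
      (α - 1) ^ γ * (1 + θ 1 ^ (1 - γ)) * (P u + f u - Fstar)
      + (α - 1) ^ γ * ((K : ℝ) ^ (-γ) *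
        (|P (x 0) + f (x 0) - (P u + f u) + τ * L * breg φ gφ u (z 0)|
          + ∑ j ∈ Finset.range K,
            (θ j ^ (1 - γ) * (ν j + η j * (‖u‖ + ‖zt (j + 1)‖)) + τ * L * μ j))) := by
  set e : ℕ → ℝ := fun j => θ j ^ (1 - γ) * (ν j + η j * (‖u‖ + ‖zt (j + 1)‖)) + τ * L * μ j
  set A₀ := P (x 0) + f (x 0) - (P u + f u) + τ * L * breg φ gφ u (z 0)
  set δ := P u + f u - Fstar
  have hγ : 1 ≤ γ := hrrse.2.1
  have hτL : 0 ≤ τ * L := mul_nonneg hrrse.1.le hstand.hLnn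
  have hx := hiter.mem_dom (hstand.hPconv.1.inter hstand.hφconv.1)
    (fun k => Set.Ioc_subset_Icc_self (hθ.2.1 k))
  have hbreg : ∀ k, 0 ≤ breg φ gφ u (z k) := fun k =>
    breg_nonneg hstand.hφconv hu.2 (interior_subset (hiter.hz k).2)
      (hstand.hφsmooth.2.1 _ (hiter.hz k).2)
  have htele := rpow_neg_mul_le_sum_of_step (a := fun k => P (x k) + f (x k) - (P u + f u))
    (e := e) (δ := δ) hθ.1 hθ.pos hτL hbreg hθ.thetaGap_nonneg
    (fun k => by linarith [hlb _ (hx k)]) (hiter.value_sub_le_succ hstand hrrse hθ hu) K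
  rw [Finset.sum_add_distrib, ← Finset.sum_mul] at htele
  set p := θ (K - 1) ^ γ
  have hp : 0 < p := Real.rpow_pos_of_pos (hθ.pos _) γ
  have hpinv : p * θ (K - 1) ^ (-γ) = 1 := by
    rw [← Real.rpow_add (hθ.pos _), add_neg_cancel, Real.rpow_zero]
  have he : 0 ≤ ∑ j ∈ Finset.range K, e j := Finset.sum_nonneg fun j _ =>
    add_nonneg (mul_nonneg (Real.rpow_nonneg (hθ.pos j).le _)
      (add_nonneg (hiter.hν j) (mul_nonneg (hiter.hη j) (by positivity))))
      (mul_nonneg hτL (hiter.hμ j))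
  have hgap := mul_le_mul_of_nonneg_left (hθ.rpow_pred_mul_sum_thetaGap_le hγ hK)
    (sub_nonneg.2 (hlb u hu))
  have herr := mul_le_mul_of_nonneg_right (hθ.rpow_pred_le hγ hK)
    (add_nonneg (abs_nonneg A₀) he)
  have hA₀ := mul_le_mul_of_nonneg_left (le_abs_self A₀) hp.le
  have hscaled := mul_le_mul_of_nonneg_left htele hp.le
  rw [← mul_assoc, hpinv, one_mul] at hscaled
  linarith


theorem eventually_value_lt (hstand : Standing Q domφ domP domf X φ P f gφ gf L)
    (hrrse : RestrictedRelSmoothExponent domφ domP X φ f gφ gf L τ γ) (hθ : ThetaSeq γ α θ)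
    (hiter : VIBPGIter domφ domP X φ P gφ gf L τ γ θ η μ ν x y z zt)
    (h1 : Tendsto (fun k : ℕ =>
      (k : ℝ) ^ (-γ) * ∑ i ∈ Finset.range k, θ i ^ (1 - γ) * η i * (‖zt (i + 1)‖ + 1))
        atTop (𝓝 0))
    (h2 : Tendsto (fun k : ℕ => (k : ℝ) ^ (-γ) * ∑ i ∈ Finset.range k, μ i) atTop (𝓝 0))
    (h3 : Tendsto (fun k : ℕ =>
      (k : ℝ) ^ (-γ) * ∑ i ∈ Finset.range k, θ i ^ (1 - γ) * ν i) atTop (𝓝 0))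
    {Fstar : ℝ} (hlb : ∀ v ∈ domP ∩ domφ, Fstar ≤ P v + f v) {u : E} (hu : u ∈ domP ∩ domφ)
    {c : ℝ} (hc : P u + f u + (α - 1) ^ γ * (1 + θ 1 ^ (1 - γ)) * (P u + f u - Fstar) < c) :
    ∀ᶠ K in atTop, P (x K) + f (x K) < c := by
  have herr := (tendsto_rpow_neg_mul_error_sum (w := fun j => zt (j + 1))
    (C := |P (x 0) + f (x 0) - (P u + f u) + τ * L * breg φ gφ u (z 0)|)
    (by linarith [hrrse.2.1]) hθ.pos hiter.hη hiter.hμ hiter.hν (norm_nonneg u)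
    (mul_nonneg hrrse.1.le hstand.hLnn) h1 h2 h3).const_mul ((α - 1) ^ γ)
  rw [mul_zero] at herr
  filter_upwards [herr.eventually (gt_mem_nhds (sub_pos.2 hc)), eventually_ge_atTop 1]
    with K hKerr hK
  linarith [hiter.value_sub_le hstand hrrse hθ hlb hu hK]
end VIBPGIter

/-- **Function value convergence of v-iBPG** (Theorem 4.1(ii)). Under the standing assumptions
and the restricted relative smoothness exponent assumption, if
`k^{−γ} Σ_{i<k} θ_i^{1−γ} η_i (‖z̃^{i+1}‖+1) → 0`, `k^{−γ} Σ_{i<k} μ_i → 0` and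
`k^{−γ} Σ_{i<k} θ_i^{1−γ} ν_i → 0`, then `F(x^k) → F*`, where `F = P + f` and
`F* = inf {F x : x ∈ Q} > −∞`. -/
theorem vIBPG_value_convergence
    {E : Type*} [NormedAddCommGroup E] [InnerProductSpace ℝ E] [FiniteDimensional ℝ E]
    (Q domφ domP domf X : Set E) (φ P f : E → ℝ) (gφ gf : E → E) (L τ γ α : ℝ)
    (hstand : Standing Q domφ domP domf X φ P f gφ gf L)
    (hrrse : RestrictedRelSmoothExponent domφ domP X φ f gφ gf L τ γ)
    (θ η μ ν : ℕ → ℝ) (hθ : ThetaSeq γ α θ)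
    (x y z zt : ℕ → E)
    (hiter : VIBPGIter domφ domP X φ P gφ gf L τ γ θ η μ ν x y z zt)
    (Fstar : ℝ) (hFstar : IsGLB ((fun u => P u + f u) '' (domP ∩ domf ∩ Q)) Fstar)
    (h1 : Tendsto (fun k : ℕ =>
            (k : ℝ) ^ (-γ) * ∑ i ∈ Finset.range k, θ i ^ (1 - γ) * η i * (‖zt (i+1)‖ + 1))
          atTop (𝓝 0))
    (h2 : Tendsto (fun k : ℕ => (k : ℝ) ^ (-γ) * ∑ i ∈ Finset.range k, μ i) atTop (𝓝 0))
    (h3 : Tendsto (fun k : ℕ =>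
            (k : ℝ) ^ (-γ) * ∑ i ∈ Finset.range k, θ i ^ (1 - γ) * ν i) atTop (𝓝 0)) :
    Tendsto (fun k : ℕ => P (x k) + f (x k)) atTop (𝓝 Fstar) := by
  have hglb := hstand.isGLB_image_inter hFstar
  have hlb : ∀ v ∈ domP ∩ domφ, Fstar ≤ P v + f v := fun v hv => hglb.1 ⟨v, hv, rfl⟩
  have hx := hiter.mem_dom (hstand.hPconv.1.inter hstand.hφconv.1)
    (fun k => Set.Ioc_subset_Icc_self (hθ.2.1 k))
  set B := (α - 1) ^ γ * (1 + θ 1 ^ (1 - γ))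
  have hB : 0 ≤ B := mul_nonneg (Real.rpow_nonneg (by linarith [hθ.2.2.1, hrrse.2.1]) γ)
    (by linarith [Real.rpow_nonneg (hθ.pos 1).le (1 - γ)])
  refine tendsto_order.2 ⟨fun c hc => .of_forall fun k => hc.trans_le (hlb _ (hx k)),
    fun c hc => ?_⟩
  obtain ⟨_, ⟨u, hu, rfl⟩, -, hFu⟩ := hglb.exists_between
    (lt_add_of_pos_right Fstar (div_pos (sub_pos.2 hc) (by positivity : 0 < B + 1)))
  have hδ := (lt_div_iff₀ (by positivity)).1 (sub_lt_iff_lt_add'.2 hFu)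
  exact hiter.eventually_value_lt hstand hrrse hθ h1 h2 h3 hlb hu (by linarith)
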